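/- arXiv:1906.09709 — 8 statements merged into one kernel-verified Lean document; each statement's English description precedes it below -/
import Mathlib

section
/- The new subtyping relation <: is reflexive: for every type A, A <: A. -/
inductive Ty : Type where
  | U : Ty
  | const : ℕ → Ty
  | arrow : Ty → Ty → Ty
  | inter : Ty → Ty → Ty

/-- The part relation A ∈⁺ B. -/
inductive Ty.Part : Ty → Ty → Prop where
  | atomU : Ty.Part .U .U
  | atomC (n : ℕ) : Ty.Part (.const n) (.const n)
  | arrow (A B : Ty) : Ty.Part (.arrow A B) (.arrow A B)
  | interL {A B C : Ty} : Ty.Part A B → Ty.Part A (.inter B C)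
  | interR {A B C : Ty} : Ty.Part A C → Ty.Part A (.inter B C)

/-- Containment A ⊆⁺ B: every part of A is a part of B. -/
def Ty.Contain (A B : Ty) : Prop := ∀ C, Ty.Part C A → Ty.Part C B

/-- Partial domain function. -/
def Ty.dom : Ty → Option Ty
  | .arrow A _ => some A
  | .inter A B => do pure (.inter (← A.dom) (← B.dom))
  | _ => none

/-- Partial codomain function. -/
def Ty.cod : Ty → Option Ty
  | .arrow _ B => some B
  | .inter A B => do pure (.inter (← A.cod) (← B.cod))
  | _ => none

/-- The top predicate: types equivalent to U. -/
inductive Ty.Top : Ty → Prop where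
  | u : Ty.Top .U
  | arrow {A B : Ty} : Ty.Top B → Ty.Top (.arrow A B)
  | inter {A B : Ty} : Ty.Top A → Ty.Top B → Ty.Top (.inter A B)

/-- topInCod(D): some function part of D has a top codomain. -/
def Ty.TopInCod (D : Ty) : Prop := ∃ A B : Ty, Ty.Part (.arrow A B) D ∧ Ty.Top B

/-- The new subtyping relation A <: B. -/
inductive Ty.NSub : Ty → Ty → Prop where
  | reflU : Ty.NSub .U .U
  | reflC (n : ℕ) : Ty.NSub (.const n) (.const n)
  | lbL {A B C : Ty} : Ty.NSub A C → Ty.NSub (.inter A B) C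
  | lbR {A B C : Ty} : Ty.NSub B C → Ty.NSub (.inter A B) C
  | glb {A C D : Ty} : Ty.NSub A C → Ty.NSub A D → Ty.NSub A (.inter C D)
  | arrow {A B C D dB cB : Ty} :
      Ty.Contain B A → B.dom = some dB → B.cod = some cB →
      Ty.NSub C dB → Ty.NSub cB D → ¬ Ty.Top D → ¬ Ty.TopInCod B →
      Ty.NSub A (.arrow C D)
  | utop {A : Ty} : Ty.NSub A .U
  | uarrow {A C D : Ty} : Ty.Top D → Ty.NSub A (.arrow C D)

/-- BCD subtyping A ≤ B. -/
inductive Ty.BSub : Ty → Ty → Prop where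
  | refl (A : Ty) : Ty.BSub A A
  | trans {A B C : Ty} : Ty.BSub A B → Ty.BSub B C → Ty.BSub A C
  | inclL (A B : Ty) : Ty.BSub (.inter A B) A
  | inclR (A B : Ty) : Ty.BSub (.inter A B) B
  | glb {A C D : Ty} : Ty.BSub A C → Ty.BSub A D → Ty.BSub A (.inter C D)
  | arrow {A B C D : Ty} : Ty.BSub C A → Ty.BSub B D → Ty.BSub (.arrow A B) (.arrow C D)
  | distrib (A B C : Ty) : Ty.BSub (.inter (.arrow A B) (.arrow A C)) (.arrow A (.inter B C))
  | utop (A : Ty) : Ty.BSub A .U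
  | uarrow (C : Ty) : Ty.BSub .U (.arrow C .U)

/-- C→D factors A. -/
def Ty.Factors (C D A : Ty) : Prop :=
  ∃ B dB cB : Ty, Ty.Contain B A ∧ B.dom = some dB ∧ B.cod = some cB ∧
    Ty.NSub C dB ∧ Ty.NSub cB D ∧ ¬ Ty.TopInCod B

def Ty.size : Ty → ℕ
  | .U => 0
  | .const _ => 0
  | .arrow A B => 1 + A.size + B.size
  | .inter A B => 1 + A.size + B.size

def Ty.depth : Ty → ℕ
  | .U => 0
  | .const _ => 0
  | .arrow A B => 1 + max A.depth B.depth
  | .inter A B => max A.depth B.depth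

theorem nsub_refl (A : Ty) : Ty.NSub A A := by
  induction A with
  | U => exact .reflU
  | const n => exact .reflC n
  | inter A B ihA ihB => exact .glb (.lbL ihA) (.lbR ihB)
  | arrow A B ihA ihB =>
    by_cases h : Ty.Top B
    · exact .uarrow h
    · refine .arrow (B := .arrow A B) (fun C hC => hC) rfl rfl ihA ihB h ?_
      rintro ⟨X, Y, hp, ht⟩
      cases hp
      exact h ht
end

section
/- If A <: B in the new subtyping relation and C is a part of B (C ∈⁺ B), then A <: C. -/
theorem nsub_part (A B C : Ty) (h : Ty.NSub A B) (hp : Ty.Part C B) : Ty.NSub A C := by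
  induction h generalizing C with
  | reflU => cases hp; exact .reflU
  | reflC n => cases hp; exact .reflC n
  | lbL _ ih => exact .lbL (ih _ hp)
  | lbR _ ih => exact .lbR (ih _ hp)
  | glb _ _ ih1 ih2 =>
    cases hp with
    | interL h => exact ih1 _ h
    | interR h => exact ih2 _ h
  | arrow hc hd hcod hs1 hs2 ht htc _ _ =>
    cases hp; exact .arrow hc hd hcod hs1 hs2 ht htc
  | utop => cases hp; exact .utop
  | uarrow ht => cases hp; exact .uarrow ht
end

section
/- If top(A) holds, then for every type B, B <: A in the new subtyping relation. -/
theorem nsub_top (A : Ty) (h : Ty.Top A) : ∀ B : Ty, Ty.NSub B A := by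
  induction h with
  | u => exact fun B => .utop
  | arrow ht ih => exact fun B => .uarrow ht
  | inter h1 h2 ih1 ih2 => exact fun B => .glb (ih1 B) (ih2 B)
end

section
/- Inversion principle for function types: if A <: B in the new subtyping relation, C→D ∈⁺ B, and ¬top(D), then C→D factors A, i.e., there exists B' with B' ⊆⁺ A, C <: dom(B'), cod(B') <: D, and ¬topInCod(B'). -/
theorem nsub_fun_inv (A B C D : Ty) (h : Ty.NSub A B) (hp : Ty.Part (.arrow C D) B)
    (hd : ¬ Ty.Top D) : Ty.Factors C D A := by
  induction h generalizing C D with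
  | reflU => cases hp
  | reflC => cases hp
  | lbL h ih =>
    obtain ⟨B', dB, cB, hc, hdm, hcd, h1, h2, h3⟩ := ih _ _ hp hd
    exact ⟨B', dB, cB, fun X hx => .interL (hc X hx), hdm, hcd, h1, h2, h3⟩
  | lbR h ih =>
    obtain ⟨B', dB, cB, hc, hdm, hcd, h1, h2, h3⟩ := ih _ _ hp hd
    exact ⟨B', dB, cB, fun X hx => .interR (hc X hx), hdm, hcd, h1, h2, h3⟩
  | glb h1 h2 ih1 ih2 =>
    cases hp with
    | interL hp => exact ih1 _ _ hp hd
    | interR hp => exact ih2 _ _ hp hd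
  | arrow hc hdm hcd hC hD hTop hTic =>
    cases hp
    exact ⟨_, _, _, hc, hdm, hcd, hC, hD, hTic⟩
  | utop => cases hp
  | uarrow ht => cases hp; exact absurd ht hd
end

section
/- If for all C, D: (C→D ∈⁺ A and ¬top(D)) implies C→D factors B, and ¬topInCod(A), and dom(A), cod(A) are defined, then dom(A)→cod(A) factors B. -/
/-! Induction on `A`: an arrow `C → D` is its own domain and codomain, so it factors `B` by
hypothesis, and at an intersection the witnesses `B₁`, `B₂` of the two halves combine into
`B₁ ∩ B₂`, because `dom`, `cod`, `<:` and `topInCod` all act componentwise on `∩`. -/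

namespace Ty

theorem dom_inter_eq_some {A B D : Ty} :
    (inter A B).dom = some D ↔ ∃ D₁ D₂, A.dom = some D₁ ∧ B.dom = some D₂ ∧ D = inter D₁ D₂ := by
  simp only [dom, Option.pure_def, Option.bind_eq_bind, Option.bind_eq_some_iff,
    Option.some.injEq]
  grind

theorem cod_inter_eq_some {A B D : Ty} :
    (inter A B).cod = some D ↔ ∃ D₁ D₂, A.cod = some D₁ ∧ B.cod = some D₂ ∧ D = inter D₁ D₂ := by
  simp only [cod, Option.pure_def, Option.bind_eq_bind, Option.bind_eq_some_iff,
    Option.some.injEq]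
  grind

theorem Contain.inter {B₁ B₂ A : Ty} (h₁ : Contain B₁ A) (h₂ : Contain B₂ A) :
    Contain (inter B₁ B₂) A := by
  intro C hC
  cases hC with
  | interL hC => exact h₁ C hC
  | interR hC => exact h₂ C hC

theorem topInCod_inter {A B : Ty} : TopInCod (inter A B) ↔ TopInCod A ∨ TopInCod B := by
  constructor
  · rintro ⟨C, D, hCD, hD⟩
    cases hCD with
    | interL hCD => exact .inl ⟨C, D, hCD, hD⟩
    | interR hCD => exact .inr ⟨C, D, hCD, hD⟩
  · rintro (⟨C, D, hCD, hD⟩ | ⟨C, D, hCD, hD⟩)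
    exacts [⟨C, D, hCD.interL, hD⟩, ⟨C, D, hCD.interR, hD⟩]

theorem NSub.inter_mono {C₁ C₂ D₁ D₂ : Ty} (h₁ : NSub C₁ D₁) (h₂ : NSub C₂ D₂) :
    NSub (inter C₁ C₂) (inter D₁ D₂) :=
  .glb (.lbL h₁) (.lbR h₂)

theorem Factors.inter {C₁ C₂ D₁ D₂ B : Ty} (h₁ : Factors C₁ D₁ B) (h₂ : Factors C₂ D₂ B) :
    Factors (inter C₁ C₂) (inter D₁ D₂) B := by
  obtain ⟨B₁, dB₁, cB₁, hB₁, hd₁, hc₁, hC₁, hD₁, ht₁⟩ := h₁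
  obtain ⟨B₂, dB₂, cB₂, hB₂, hd₂, hc₂, hC₂, hD₂, ht₂⟩ := h₂
  refine ⟨.inter B₁ B₂, .inter dB₁ dB₂, .inter cB₁ cB₂, hB₁.inter hB₂,
    dom_inter_eq_some.2 ⟨_, _, hd₁, hd₂, rfl⟩, cod_inter_eq_some.2 ⟨_, _, hc₁, hc₂, rfl⟩,
    hC₁.inter_mono hC₂, hD₁.inter_mono hD₂, ?_⟩
  rw [topInCod_inter]
  exact not_or_intro ht₁ ht₂

end Ty

theorem factors_dom_cod (A B dA cA : Ty)
    (h : ∀ C D : Ty, Ty.Part (.arrow C D) A → ¬ Ty.Top D → Ty.Factors C D B)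
    (ht : ¬ Ty.TopInCod A) (hd : A.dom = some dA) (hc : A.cod = some cA) :
    Ty.Factors dA cA B := by
  induction A generalizing dA cA with
  | U => cases hd
  | const => cases hd
  | arrow C D =>
    cases hd
    cases hc
    exact h C D (.arrow C D) fun hD => ht ⟨C, D, .arrow C D, hD⟩
  | inter A₁ A₂ ih₁ ih₂ =>
    obtain ⟨d₁, d₂, hd₁, hd₂, rfl⟩ := Ty.dom_inter_eq_some.1 hd
    obtain ⟨c₁, c₂, hc₁, hc₂, rfl⟩ := Ty.cod_inter_eq_some.1 hc
    rw [Ty.topInCod_inter, not_or] at ht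
    exact (ih₁ d₁ c₁ (fun C D hCD => h C D hCD.interL) ht.1 hd₁ hc₁).inter
      (ih₂ d₂ c₂ (fun C D hCD => h C D hCD.interR) ht.2 hd₂ hc₂)
end

section
/- The function subtyping rule is admissible in the new system: if C <: A and B <: D, then A → B <: C → D. -/
lemma part_top {P A : Ty} (hp : Ty.Part P A) (ht : Ty.Top A) : Ty.Top P := by
  induction hp with
  | atomU => exact ht
  | atomC n => cases ht
  | arrow A B => exact ht
  | interL h ih => cases ht with | inter h1 h2 => exact ih h1
  | interR h ih => cases ht with | inter h1 h2 => exact ih h2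

lemma exists_arrow_part {B cB : Ty} (h : B.cod = some cB) :
    ∃ X Y, Ty.Part (.arrow X Y) B := by
  induction B generalizing cB with
  | U => simp [Ty.cod] at h
  | const n => simp [Ty.cod] at h
  | arrow X Y => exact ⟨X, Y, .arrow X Y⟩
  | inter P Q ihP ihQ =>
    simp only [Ty.cod, bind, Option.bind] at h
    cases hP : P.cod with
    | none => simp [hP] at h
    | some p =>
      obtain ⟨X, Y, hpart⟩ := ihP hP
      exact ⟨X, Y, .interL hpart⟩

lemma top_up {B D : Ty} (h : Ty.NSub B D) (ht : Ty.Top B) : Ty.Top D := by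
  induction h with
  | reflU => exact ht
  | reflC n => cases ht
  | lbL h ih => cases ht with | inter h1 h2 => exact ih h1
  | lbR h ih => cases ht with | inter h1 h2 => exact ih h2
  | glb h1 h2 ih1 ih2 => exact .inter (ih1 ht) (ih2 ht)
  | arrow hcon hdom hcod hC hD hnt hntc ih1 ih2 =>
    exfalso
    obtain ⟨X, Y, hpart⟩ := exists_arrow_part hcod
    have : Ty.Top (Ty.arrow X Y) := part_top (hcon _ hpart) ht
    cases this with
    | arrow hY => exact hntc ⟨X, Y, hpart, hY⟩
  | utop => exact .u
  | uarrow hD => exact .arrow hD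

theorem nsub_arrow (A B C D : Ty) (h1 : Ty.NSub C A) (h2 : Ty.NSub B D) :
    Ty.NSub (.arrow A B) (.arrow C D) := by
  rcases Classical.em (Ty.Top D) with hD | hD
  · exact .uarrow hD
  · refine .arrow (B := .arrow A B) (fun _ h => h) rfl rfl h1 h2 hD ?_
    rintro ⟨X, Y, hp, hty⟩
    cases hp
    exact hD (top_up h2 hty)
end

section
/- In BCD subtyping, every type whose domain and codomain are defined is a subtype of the function type formed from them: A ≤ dom(A) → cod(A). -/
namespace Ty

theorem dom_inter_eq_some_s14 {X Y d : Ty} :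
    (inter X Y).dom = some d ↔ ∃ dX dY, X.dom = some dX ∧ Y.dom = some dY ∧ d = inter dX dY := by
  simp only [dom, Option.pure_def, Option.bind_eq_bind, Option.bind_eq_some_iff, Option.some.injEq]
  grind

theorem cod_inter_eq_some_s14 {X Y c : Ty} :
    (inter X Y).cod = some c ↔ ∃ cX cY, X.cod = some cX ∧ Y.cod = some cY ∧ c = inter cX cY := by
  simp only [cod, Option.pure_def, Option.bind_eq_bind, Option.bind_eq_some_iff, Option.some.injEq]
  grind

namespace BSub

theorem inter_mono {A B C D : Ty} (hAC : BSub A C) (hBD : BSub B D) :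
    BSub (.inter A B) (.inter C D) :=
  glb ((inclL A B).trans hAC) ((inclR A B).trans hBD)

theorem arrow_inter_arrow (A B C D : Ty) :
    BSub (.inter (.arrow A B) (.arrow C D)) (.arrow (.inter A C) (.inter B D)) :=
  (inter_mono (arrow (inclL A C) (refl B)) (arrow (inclR A C) (refl D))).trans (distrib _ _ _)

end BSub

end Ty

theorem bsub_dom_cod (A dA cA : Ty) (hd : A.dom = some dA) (hc : A.cod = some cA) :
    Ty.BSub A (.arrow dA cA) := by
  induction A generalizing dA cA with
  | U | const _ => simp [Ty.dom] at hd
  | arrow X Y =>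
    obtain ⟨rfl⟩ : X = dA := Option.some.inj hd
    obtain ⟨rfl⟩ : Y = cA := Option.some.inj hc
    exact .refl _
  | inter X Y ihX ihY =>
    obtain ⟨dX, dY, hdX, hdY, rfl⟩ := Ty.dom_inter_eq_some_s14.mp hd
    obtain ⟨cX, cY, hcX, hcY, rfl⟩ := Ty.cod_inter_eq_some_s14.mp hc
    exact (Ty.BSub.inter_mono (ihX dX cX hdX hcX) (ihY dY cY hdY hcY)).trans
      (Ty.BSub.arrow_inter_arrow dX cX dY cY)
end

section
/- Soundness of the new subtyping relation with respect to BCD: if A <: B then A ≤ B. -/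
/-! Every rule of `<:` is derivable in BCD. For `(→')`, with `B' ⊆⁺ A` we get
`A ≤ B' ≤ dom B' → cod B' ≤ C → D`, the middle step by `(→∩)`; for `(U→')`, a top type `D`
satisfies `U ≤ D`, hence `A ≤ U ≤ C → D`. -/

namespace Ty

theorem Part.bsub {C A : Ty} (h : Part C A) : BSub A C := by
  induction h with
  | atomU | atomC | arrow => exact .refl _
  | interL _ ih => exact (BSub.inclL _ _).trans ih
  | interR _ ih => exact (BSub.inclR _ _).trans ih

theorem Contain.bsub {B A : Ty} (h : Contain B A) : BSub A B := by
  induction B with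
  | U => exact (h _ .atomU).bsub
  | const n => exact (h _ (.atomC n)).bsub
  | arrow C D => exact (h _ (.arrow C D)).bsub
  | inter C D ihC ihD =>
    exact .glb (ihC fun E hE => h E (.interL hE)) (ihD fun E hE => h E (.interR hE))

theorem BSub.inter_arrow {A B C D E F : Ty} (hA : BSub A (.arrow C E))
    (hB : BSub B (.arrow D F)) :
    BSub (inter A B) (.arrow (inter C D) (inter E F)) :=
  have hE : BSub (inter A B) (.arrow (inter C D) E) :=
    ((BSub.inclL _ _).trans hA).trans (.arrow (.inclL _ _) (.refl _))
  have hF : BSub (inter A B) (.arrow (inter C D) F) :=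
    ((BSub.inclR _ _).trans hB).trans (.arrow (.inclR _ _) (.refl _))
  (BSub.glb hE hF).trans (.distrib _ _ _)

theorem bsub_arrow_dom_cod {B dB cB : Ty} (hdom : B.dom = some dB) (hcod : B.cod = some cB) :
    BSub B (arrow dB cB) := by
  induction B generalizing dB cB with
  | U | const => simp [dom] at hdom
  | arrow C D =>
    simp only [dom, cod, Option.some.injEq] at hdom hcod
    subst hdom hcod
    exact .refl _
  | inter C D ihC ihD =>
    simp only [dom, cod, Option.bind_eq_bind, Option.bind_eq_some_iff, Option.pure_def,
      Option.some.injEq] at hdom hcod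
    obtain ⟨dC, hdC, dD, hdD, rfl⟩ := hdom
    obtain ⟨cC, hcC, cD, hcD, rfl⟩ := hcod
    exact (ihC hdC hcC).inter_arrow (ihD hdD hcD)

theorem Top.u_bsub {D : Ty} (h : Top D) : BSub U D := by
  induction h with
  | u => exact .refl _
  | arrow _ ih => exact (BSub.uarrow _).trans (.arrow (.refl _) ih)
  | inter _ _ ihA ihB => exact .glb ihA ihB

end Ty

theorem nsub_sound (A B : Ty) (h : Ty.NSub A B) : Ty.BSub A B := by
  induction h with
  | reflU | reflC => exact .refl _
  | lbL _ ih => exact (Ty.BSub.inclL _ _).trans ih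
  | lbR _ ih => exact (Ty.BSub.inclR _ _).trans ih
  | glb _ _ ihC ihD => exact .glb ihC ihD
  | arrow hcon hdom hcod _ _ _ _ ihdom ihcod =>
    exact hcon.bsub.trans ((Ty.bsub_arrow_dom_cod hdom hcod).trans (.arrow ihdom ihcod))
  | utop => exact .utop _
  | uarrow hD => exact (Ty.BSub.utop _).trans (Ty.Top.arrow hD).u_bsub
end
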